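/- arXiv:2302.12020 — 2 statements merged into one kernel-verified Lean document; each statement's English description precedes it below -/
import Mathlib

section
/- Let d be a positive natural number, σ > 0, μ, ν ∈ ℝ^d, and λ > 1. Let P be the Gaussian measure on ℝ^d with mean μ and covariance σ²·I, and Q the Gaussian measure with mean ν and covariance σ²·I. Then the Rényi divergence of order λ satisfies D_λ(P ‖ Q) = λ · ‖μ − ν‖₂² / (2σ²). -/
open MeasureTheory

/-- The Rényi divergence of order `l` between measures `P` and `Q`
(for `P ≪ Q`): `D_l(P ‖ Q) = (1/(l-1)) · log ∫ (dP/dQ)^l dQ`. -/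
noncomputable def renyiDiv {Ω : Type*} [MeasurableSpace Ω] (l : ℝ)
    (P Q : Measure Ω) : ℝ :=
  (l - 1)⁻¹ * Real.log (∫ x, (P.rnDeriv Q x).toReal ^ l ∂Q)

/-- The Gaussian measure on `ℝ^d` with mean `μ` and covariance `σ² · I`, given by its
density `(2πσ²)^(-d/2) · exp(-‖x - μ‖²/(2σ²))` with respect to Lebesgue measure. -/
noncomputable def gaussianEuclidean (d : ℕ) (μ : EuclideanSpace ℝ (Fin d)) (σ : ℝ) :
    Measure (EuclideanSpace ℝ (Fin d)) :=
  volume.withDensity fun x =>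
    ENNReal.ofReal ((2 * Real.pi * σ ^ 2) ^ (-(d : ℝ) / 2) *
      Real.exp (-‖x - μ‖ ^ 2 / (2 * σ ^ 2)))

private lemma aux_norm_id {E : Type*} [NormedAddCommGroup E] [InnerProductSpace ℝ E]
    (y w : E) (l : ℝ) :
    l * ‖y - (1-l) • w‖^2 + (1-l) * ‖y + l • w‖^2 = ‖y‖^2 + l*(1-l)*‖w‖^2 := by
  rw [norm_sub_sq_real, norm_add_sq_real, real_inner_smul_right, real_inner_smul_right,
    norm_smul, norm_smul, mul_pow, mul_pow]
  simp only [Real.norm_eq_abs, sq_abs]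
  ring

private lemma aux_gauss_int (d : ℕ) (σ : ℝ) (hσ : 0 < σ) (m : EuclideanSpace ℝ (Fin d)) :
    ∫ x : EuclideanSpace ℝ (Fin d), Real.exp (-‖x - m‖^2 / (2*σ^2))
      = (2*Real.pi*σ^2) ^ ((d:ℝ)/2) := by
  have h1 : ∀ x : EuclideanSpace ℝ (Fin d), Real.exp (-‖x - m‖^2 / (2*σ^2))
      = Real.exp (-(2*σ^2)⁻¹ * ‖x - m‖^2) := by intro x; rw [neg_div, div_eq_inv_mul, neg_mul]
  simp_rw [h1]
  rw [show (fun x : EuclideanSpace ℝ (Fin d) => Real.exp (-(2*σ^2)⁻¹ * ‖x - m‖^2))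
      = fun x => (fun y => Real.exp (-(2*σ^2)⁻¹ * ‖y‖^2)) (x + -m) by
    funext x; simp [sub_eq_add_neg]]
  rw [integral_add_right_eq_self
    (fun y : EuclideanSpace ℝ (Fin d) => Real.exp (-(2*σ^2)⁻¹ * ‖y‖^2)) (-m)]
  rw [GaussianFourier.integral_rexp_neg_mul_sq_norm (by positivity)]
  rw [finrank_euclideanSpace_fin]
  congr 1
  field_simp

/-- For two spherical Gaussians on `ℝ^d` with means `μ, ν` and common
covariance `σ² · I`, the Rényi divergence of order `l > 1` is exactly
`l · ‖μ - ν‖² / (2σ²)`. -/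
theorem renyiDiv_gaussian_eq
    (d : ℕ) (hd : 0 < d) (σ : ℝ) (hσ : 0 < σ)
    (μ ν : EuclideanSpace ℝ (Fin d)) (l : ℝ) (hl : 1 < l) :
    renyiDiv l (gaussianEuclidean d μ σ) (gaussianEuclidean d ν σ) =
      l * ‖μ - ν‖ ^ 2 / (2 * σ ^ 2) := by
  have hs2 : (0:ℝ) < 2 * σ ^ 2 := by positivity
  set C : ℝ := (2 * Real.pi * σ ^ 2) ^ (-(d:ℝ)/2) with hCdef
  have hCpos : 0 < C := Real.rpow_pos_of_pos (by positivity) _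
  set f : EuclideanSpace ℝ (Fin d) → ℝ :=
    fun x => C * Real.exp (-‖x - μ‖^2 / (2*σ^2)) with hfdef
  set g : EuclideanSpace ℝ (Fin d) → ℝ :=
    fun x => C * Real.exp (-‖x - ν‖^2 / (2*σ^2)) with hgdef
  have hfpos : ∀ x, 0 < f x := fun x => by positivity
  have hgpos : ∀ x, 0 < g x := fun x => by positivity
  have hfm : Measurable f := by fun_prop
  have hgm : Measurable g := by fun_prop
  have hP : gaussianEuclidean d μ σ = volume.withDensity (fun x => ENNReal.ofReal (f x)) := rfl
  have hQ : gaussianEuclidean d ν σ = volume.withDensity (fun x => ENNReal.ofReal (g x)) := rfl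
  set P := gaussianEuclidean d μ σ
  set Q := gaussianEuclidean d ν σ
  haveI : SigmaFinite P := by
    rw [hP]
    exact SigmaFinite.withDensity_of_ne_top (ae_of_all _ fun x => ENNReal.ofReal_ne_top)
  have h1 : P.rnDeriv volume =ᵐ[volume] fun x => ENNReal.ofReal (f x) := by
    rw [hP]; exact Measure.rnDeriv_withDensity volume (by fun_prop)
  have h2 : P.rnDeriv Q =ᵐ[volume]
      fun x => (ENNReal.ofReal (g x))⁻¹ * P.rnDeriv volume x := by
    rw [hQ]
    exact Measure.rnDeriv_withDensity_right P volume (by fun_prop)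
      (ae_of_all _ fun x => by simp [ENNReal.ofReal_eq_zero, not_le, hgpos x])
      (ae_of_all _ fun x => ENNReal.ofReal_ne_top)
  have hRN : (fun x => ((P.rnDeriv Q) x).toReal ^ l) =ᵐ[volume]
      fun x => (f x / g x) ^ l := by
    filter_upwards [h1, h2] with x h1x h2x
    rw [h2x, h1x, ENNReal.toReal_mul, ENNReal.toReal_inv, ENNReal.toReal_ofReal (hgpos x).le,
      ENNReal.toReal_ofReal (hfpos x).le, inv_mul_eq_div]
  -- main integral computation
  set m : EuclideanSpace ℝ (Fin d) := l • μ + (1-l) • ν with hmdef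
  set K : ℝ := Real.exp (l * (l-1) * ‖μ - ν‖^2 / (2*σ^2)) with hKdef
  have hxid : ∀ x : EuclideanSpace ℝ (Fin d),
      l * ‖x - μ‖^2 + (1-l) * ‖x - ν‖^2 = ‖x - m‖^2 + l*(1-l)*‖μ - ν‖^2 := by
    intro x
    have e1 : x - μ = (x - m) - (1-l) • (μ - ν) := by rw [hmdef]; module
    have e2 : x - ν = (x - m) + l • (μ - ν) := by rw [hmdef]; module
    rw [e1, e2, aux_norm_id]
  have hkey : ∀ x, g x * (f x / g x) ^ l = C * (K * Real.exp (-‖x - m‖^2 / (2*σ^2))) := by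
    intro x
    have hfg : f x / g x = Real.exp (-‖x - μ‖^2 / (2*σ^2)) / Real.exp (-‖x - ν‖^2 / (2*σ^2)) := by
      rw [hfdef, hgdef, mul_div_mul_left _ _ hCpos.ne']
    rw [hfg, ← Real.exp_sub, ← Real.exp_mul, hgdef, hKdef, mul_assoc, ← Real.exp_add,
      ← Real.exp_add]
    congr 1
    rw [Real.exp_eq_exp]
    linear_combination (-(2*σ^2)⁻¹) * hxid x
  have hQae : ae Q ≤ ae volume := by
    rw [hQ]; exact (withDensity_absolutelyContinuous volume _).ae_le
  have hint : ∫ x, ((P.rnDeriv Q) x).toReal ^ l ∂Q = K := by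
    rw [integral_congr_ae (hRN.filter_mono hQae)]
    have step2 : ∫ x, (f x / g x) ^ l ∂Q = ∫ x, (g x).toNNReal • (f x / g x) ^ l := by
      rw [hQ]
      exact integral_withDensity_eq_integral_smul hgm.real_toNNReal _
    rw [step2]
    have step3 : ∀ x : EuclideanSpace ℝ (Fin d),
        (g x).toNNReal • (f x / g x) ^ l = C * (K * Real.exp (-‖x - m‖^2 / (2*σ^2))) := by
      intro x
      rw [NNReal.smul_def, Real.coe_toNNReal _ (hgpos x).le, smul_eq_mul]
      exact hkey x
    simp_rw [step3]
    rw [MeasureTheory.integral_const_mul, MeasureTheory.integral_const_mul, aux_gauss_int d σ hσ m]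
    rw [show C * (K * (2 * Real.pi * σ ^ 2) ^ ((d:ℝ)/2))
        = C * (2 * Real.pi * σ ^ 2) ^ ((d:ℝ)/2) * K by ring]
    rw [hCdef, ← Real.rpow_add (by positivity),
      show (-(d:ℝ)/2 + (d:ℝ)/2) = 0 by ring, Real.rpow_zero, one_mul]
  have hl1 : l - 1 ≠ 0 := by linarith
  rw [renyiDiv, hint, hKdef, Real.log_exp]
  field_simp
end

section
/- Let d be a positive natural number, σ > 0, λ > 1, s ≥ 0, and let μ, ν ∈ ℝ^d satisfy ‖μ − ν‖₂ ≤ s. Let P and Q be the Gaussian measures on ℝ^d with means μ and ν respectively, each with covariance σ²·I. Then the Rényi divergence of order λ satisfies D_λ(P ‖ Q) ≤ s²λ/(2σ²). -/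
open MeasureTheory Real

section aux
variable {d : ℕ}

noncomputable def gdens (d : ℕ) (σ : ℝ) (m x : EuclideanSpace ℝ (Fin d)) : ℝ :=
  (2 * Real.pi * σ ^ 2) ^ (-(d : ℝ) / 2) * Real.exp (-‖x - m‖ ^ 2 / (2 * σ ^ 2))

lemma gdens_pos {σ : ℝ} (hσ : 0 < σ) (m x : EuclideanSpace ℝ (Fin d)) :
    0 < gdens d σ m x := by
  unfold gdens
  have h2 : (0:ℝ) < 2 * Real.pi * σ ^ 2 := by positivity
  positivity

lemma gdens_continuous (d : ℕ) (σ : ℝ) (m : EuclideanSpace ℝ (Fin d)) :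
    Continuous (gdens d σ m) := by
  unfold gdens
  fun_prop

lemma gauss_integral_one (d : ℕ) {σ : ℝ} (hσ : 0 < σ) (m : EuclideanSpace ℝ (Fin d)) :
    ∫ x : EuclideanSpace ℝ (Fin d), gdens d σ m x = 1 := by
  unfold gdens
  have hb : (0:ℝ) < 1 / (2 * σ ^ 2) := by positivity
  rw [integral_const_mul]
  rw [integral_sub_right_eq_self (μ := volume)
    (fun x : EuclideanSpace ℝ (Fin d) => Real.exp (-‖x‖ ^ 2 / (2 * σ ^ 2))) m]
  have h : ∀ x : EuclideanSpace ℝ (Fin d),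
      Real.exp (-‖x‖ ^ 2 / (2 * σ ^ 2)) = Real.exp (-(1/(2*σ^2)) * ‖x‖ ^ 2) := by
    intro x; ring_nf
  simp_rw [h]
  rw [GaussianFourier.integral_rexp_neg_mul_sq_norm hb, finrank_euclideanSpace_fin]
  have h2 : Real.pi / (1 / (2 * σ ^ 2)) = 2 * Real.pi * σ ^ 2 := by
    field_simp
  rw [h2, ← Real.rpow_add (by positivity), neg_div, neg_add_cancel, Real.rpow_zero]

lemma quad_id' (l : ℝ) (y w : EuclideanSpace ℝ (Fin d)) :
    ‖y - l • w‖ ^ 2 = l * ‖y - w‖ ^ 2 + (1 - l) * ‖y‖ ^ 2 + l * (l - 1) * ‖w‖ ^ 2 := by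
  rw [norm_sub_sq_real, norm_sub_sq_real (x := y) (y := w), real_inner_smul_right, norm_smul,
    Real.norm_eq_abs, mul_pow, sq_abs]
  ring

lemma quad_id (l : ℝ) (x μ ν : EuclideanSpace ℝ (Fin d)) :
    ‖x - (ν + l • (μ - ν))‖ ^ 2
      = l * ‖x - μ‖ ^ 2 + (1 - l) * ‖x - ν‖ ^ 2 + l * (l - 1) * ‖μ - ν‖ ^ 2 := by
  have h1 : x - (ν + l • (μ - ν)) = (x - ν) - l • (μ - ν) := by rw [sub_add_eq_sub_sub]
  have h2 : x - μ = (x - ν) - (μ - ν) := by abel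
  rw [h1, h2, quad_id']

end aux

/-- **RDP guarantee of the Gaussian mechanism.** If `‖μ - ν‖ ≤ s`,
then the Rényi divergence of order `l > 1` between the spherical Gaussians with means
`μ, ν` and covariance `σ² · I` is at most `s² l / (2σ²)`. -/
theorem renyiDiv_gaussian_le_of_l2_sensitivity
    (d : ℕ) (hd : 0 < d) (σ : ℝ) (hσ : 0 < σ) (l : ℝ) (hl : 1 < l)
    (s : ℝ) (hs : 0 ≤ s)
    (μ ν : EuclideanSpace ℝ (Fin d)) (hμν : ‖μ - ν‖ ≤ s) :
    renyiDiv l (gaussianEuclidean d μ σ) (gaussianEuclidean d ν σ) ≤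
      s ^ 2 * l / (2 * σ ^ 2) := by
  have h2σ : (0:ℝ) < 2 * σ ^ 2 := by positivity
  have hfc := gdens_continuous d σ μ
  have hgc := gdens_continuous d σ ν
  have hfpos := gdens_pos (d := d) hσ μ
  have hgpos := gdens_pos (d := d) hσ ν
  have hP : gaussianEuclidean d μ σ
      = volume.withDensity (fun x => ENNReal.ofReal (gdens d σ μ x)) := rfl
  have hQ : gaussianEuclidean d ν σ
      = volume.withDensity (fun x => ENNReal.ofReal (gdens d σ ν x)) := rfl
  set P := gaussianEuclidean d μ σ with hPdef
  set Q := gaussianEuclidean d ν σ with hQdef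
  haveI : SigmaFinite P := by
    rw [hP]; exact SigmaFinite.withDensity_of_ne_top' (fun x => ENNReal.ofReal_ne_top)
  have hfmeas : Measurable fun x => ENNReal.ofReal (gdens d σ μ x) :=
    hfc.measurable.ennreal_ofReal
  have hgmeas : Measurable fun x => ENNReal.ofReal (gdens d σ ν x) :=
    hgc.measurable.ennreal_ofReal
  have h1 : P.rnDeriv Q
      =ᵐ[volume] fun x => (ENNReal.ofReal (gdens d σ ν x))⁻¹ * P.rnDeriv volume x := by
    rw [hQ]
    exact Measure.rnDeriv_withDensity_right P volume hgmeas.aemeasurable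
      (ae_of_all _ fun x => (ENNReal.ofReal_pos.mpr (hgpos x)).ne')
      (ae_of_all _ fun x => ENNReal.ofReal_ne_top)
  have h2 : P.rnDeriv volume =ᵐ[volume] fun x => ENNReal.ofReal (gdens d σ μ x) := by
    rw [hP]; exact Measure.rnDeriv_withDensity volume hfmeas
  have h3 : (fun x => (P.rnDeriv Q x).toReal)
      =ᵐ[volume] fun x => gdens d σ μ x / gdens d σ ν x := by
    filter_upwards [h1, h2] with x hx1 hx2
    rw [hx1, hx2, ENNReal.toReal_mul, ENNReal.toReal_inv,
      ENNReal.toReal_ofReal (hgpos x).le, ENNReal.toReal_ofReal (hfpos x).le,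
      ← div_eq_inv_mul]
  set K := Real.exp (l * (l - 1) * ‖μ - ν‖ ^ 2 / (2 * σ ^ 2)) with hK
  set m := ν + l • (μ - ν) with hm
  have key : ∀ x, gdens d σ ν x * (gdens d σ μ x / gdens d σ ν x) ^ l
      = K * gdens d σ m x := by
    intro x
    have hC : (0:ℝ) < (2 * Real.pi * σ ^ 2) ^ (-(d : ℝ) / 2) := by
      apply Real.rpow_pos_of_pos; positivity
    have hexp : -‖x - ν‖ ^ 2 / (2 * σ ^ 2)
        + (-‖x - μ‖ ^ 2 / (2 * σ ^ 2) - -‖x - ν‖ ^ 2 / (2 * σ ^ 2)) * l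
        = l * (l - 1) * ‖μ - ν‖ ^ 2 / (2 * σ ^ 2) + -‖x - m‖ ^ 2 / (2 * σ ^ 2) := by
      rw [hm, quad_id]
      field_simp
      ring
    unfold gdens
    rw [mul_div_mul_left _ _ (ne_of_gt hC), ← Real.exp_sub,
      Real.rpow_def_of_pos (Real.exp_pos _), Real.log_exp]
    calc (2 * Real.pi * σ ^ 2) ^ (-(d:ℝ) / 2) * Real.exp (-‖x - ν‖ ^ 2 / (2 * σ ^ 2)) *
          Real.exp ((-‖x - μ‖ ^ 2 / (2 * σ ^ 2) - -‖x - ν‖ ^ 2 / (2 * σ ^ 2)) * l)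
        = (2 * Real.pi * σ ^ 2) ^ (-(d:ℝ) / 2) *
            Real.exp (-‖x - ν‖ ^ 2 / (2 * σ ^ 2)
              + (-‖x - μ‖ ^ 2 / (2 * σ ^ 2) - -‖x - ν‖ ^ 2 / (2 * σ ^ 2)) * l) := by
          rw [mul_assoc, ← Real.exp_add]
      _ = (2 * Real.pi * σ ^ 2) ^ (-(d:ℝ) / 2) *
            Real.exp (l * (l - 1) * ‖μ - ν‖ ^ 2 / (2 * σ ^ 2) + -‖x - m‖ ^ 2 / (2 * σ ^ 2)) := by
          rw [hexp]
      _ = K * ((2 * Real.pi * σ ^ 2) ^ (-(d:ℝ) / 2) * Real.exp (-‖x - m‖ ^ 2 / (2 * σ ^ 2))) := by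
          rw [Real.exp_add, hK]; ring
  have hint : ∫ x, (P.rnDeriv Q x).toReal ^ l ∂Q = K := by
    have e1 : ∫ x, (P.rnDeriv Q x).toReal ^ l ∂Q
        = ∫ x, (gdens d σ ν x).toNNReal • ((P.rnDeriv Q x).toReal ^ l) ∂volume := by
      rw [hQ]
      exact integral_withDensity_eq_integral_smul hgc.measurable.real_toNNReal _
    have e2 : (fun x => (gdens d σ ν x).toNNReal • ((P.rnDeriv Q x).toReal ^ l))
        =ᵐ[volume] fun x => K * gdens d σ m x := by
      filter_upwards [h3] with x hx
      rw [NNReal.smul_def, Real.coe_toNNReal _ (hgpos x).le, smul_eq_mul, hx, key x]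
    rw [e1, integral_congr_ae e2, integral_const_mul, gauss_integral_one d hσ m, mul_one]
  have hl1 : l - 1 ≠ 0 := by linarith
  have hrd : renyiDiv l P Q = l * ‖μ - ν‖ ^ 2 / (2 * σ ^ 2) := by
    rw [renyiDiv, hint, hK, Real.log_exp]
    field_simp
  rw [hrd]
  have hnorm2 : ‖μ - ν‖ ^ 2 ≤ s ^ 2 := by
    have := norm_nonneg (μ - ν)
    nlinarith
  have hre : s ^ 2 * l / (2 * σ ^ 2) = l * s ^ 2 / (2 * σ ^ 2) := by ring
  rw [hre]
  have hl0 : (0:ℝ) ≤ l := by linarith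
  gcongr
end
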